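/- With the two-qubit POVM N⁰, N¹, N^⊥ as above and dark count parameter p_d ∈ [0,1], the operators N̄^{0/1} := ½·1 − ((1−p_d)²/2)·N^⊥ ± ((1−p_d)/2)(N⁰ − N¹) are positive semidefinite, and N̄⁰ + N̄¹ + (1−p_d)² N^⊥ = 1. -/

import Mathlib

open Matrix ComplexOrder

def ket2 (a b : Fin 2) : Fin 2 × Fin 2 → ℂ := fun p => if p = (a, b) then 1 else 0

noncomputable def proj (v : Fin 2 × Fin 2 → ℂ) : Matrix (Fin 2 × Fin 2) (Fin 2 × Fin 2) ℂ :=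
  vecMulVec v (star v)

noncomputable def phiPlus : Fin 2 × Fin 2 → ℂ :=
  fun p => (ket2 0 1 p + ket2 1 0 p) / (Real.sqrt 2 : ℂ)

noncomputable def phiMinus : Fin 2 × Fin 2 → ℂ :=
  fun p => (ket2 0 1 p - ket2 1 0 p) / (Real.sqrt 2 : ℂ)

noncomputable def Nzero : Matrix (Fin 2 × Fin 2) (Fin 2 × Fin 2) ℂ :=
  proj phiPlus + (1 / 2 : ℂ) • proj (ket2 1 1)

noncomputable def None' : Matrix (Fin 2 × Fin 2) (Fin 2 × Fin 2) ℂ :=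
  proj phiMinus + (1 / 2 : ℂ) • proj (ket2 1 1)

noncomputable def Nbot : Matrix (Fin 2 × Fin 2) (Fin 2 × Fin 2) ℂ :=
  proj (ket2 0 0)

/-!
Write `q = 1 - p_d`. Then `N̄⁰` and `N̄¹` are the operator `½·1 - (q²/2)N^⊥ + (q/2)(N⁰ - N¹)` at `q` and at
`-q`, and since `N⁰ - N¹ = |φ⁺⟩⟨φ⁺| - |φ⁻⟩⟨φ⁻|`, expanding `1` in the Bell-type basis
`|00⟩, |11⟩, |φ⁺⟩, |φ⁻⟩` diagonalises this operator with eigenvalues `(1 - q²)/2, ½, (1 + q)/2, (1 - q)/2`,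
all nonnegative for `|q| ≤ 1`.
-/

noncomputable def squashedEffect (q : ℝ) : Matrix (Fin 2 × Fin 2) (Fin 2 × Fin 2) ℂ :=
  (1 / 2 : ℝ) • (1 : Matrix (Fin 2 × Fin 2) (Fin 2 × Fin 2) ℂ)
    - (q ^ 2 / 2 : ℝ) • Nbot + (q / 2 : ℝ) • (Nzero - None')

lemma proj_add_proj_add_proj_add_proj :
    proj (ket2 0 0) + proj (ket2 1 1) + proj phiPlus + proj phiMinus = 1 := by
  have hsqrt : (Real.sqrt 2 : ℂ)⁻¹ * (Real.sqrt 2 : ℂ)⁻¹ = 2⁻¹ := by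
    rw [← mul_inv, ← Complex.ofReal_mul, Real.mul_self_sqrt zero_le_two, Complex.ofReal_ofNat]
  ext ⟨i, j⟩ ⟨k, l⟩
  fin_cases i <;> fin_cases j <;> fin_cases k <;> fin_cases l <;>
    simp [proj, phiPlus, phiMinus, ket2, vecMulVec_apply, one_apply, neg_div, hsqrt] <;> norm_num

lemma Nzero_sub_None' : Nzero - None' = proj phiPlus - proj phiMinus :=
  add_sub_add_right_eq_sub _ _ _

lemma squashedEffect_eq_sum_smul_proj (q : ℝ) :
    squashedEffect q = ((1 - q ^ 2) / 2 : ℝ) • proj (ket2 0 0) + (1 / 2 : ℝ) • proj (ket2 1 1)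
      + ((1 + q) / 2 : ℝ) • proj phiPlus + ((1 - q) / 2 : ℝ) • proj phiMinus := by
  rw [squashedEffect, ← proj_add_proj_add_proj_add_proj, Nzero_sub_None', Nbot]
  module

lemma posSemidef_squashedEffect {q : ℝ} (hq : |q| ≤ 1) : (squashedEffect q).PosSemidef := by
  obtain ⟨hq₁, hq₂⟩ := abs_le.mp hq
  have hsq : q ^ 2 ≤ 1 := by nlinarith
  rw [squashedEffect_eq_sum_smul_proj]
  refine (((?_ : PosSemidef _).add ?_).add ?_).add ?_ <;>
    refine (posSemidef_vecMulVec_self_star _).smul ?_ <;> linarith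

lemma squashedEffect_add_squashedEffect_neg (q : ℝ) :
    squashedEffect q + squashedEffect (-q) + (q ^ 2 : ℝ) • Nbot = 1 := by
  simp only [squashedEffect, neg_sq]
  module

/-- With dark count parameter `p_d ∈ [0,1]`, the operators
`N̄^{0/1} = ½·1 − ((1−p_d)²/2)N^⊥ ± ((1−p_d)/2)(N⁰ − N¹)` are positive semidefinite,
and `N̄⁰ + N̄¹ + (1−p_d)² N^⊥ = 1`. -/
theorem squashed_darkCount_POVM (pd : ℝ) (hpd : pd ∈ Set.Icc (0 : ℝ) 1) :
    let Nbar0 : Matrix (Fin 2 × Fin 2) (Fin 2 × Fin 2) ℂ :=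
      (1 / 2 : ℝ) • (1 : Matrix (Fin 2 × Fin 2) (Fin 2 × Fin 2) ℂ)
        - ((1 - pd) ^ 2 / 2 : ℝ) • Nbot + ((1 - pd) / 2 : ℝ) • (Nzero - None')
    let Nbar1 : Matrix (Fin 2 × Fin 2) (Fin 2 × Fin 2) ℂ :=
      (1 / 2 : ℝ) • (1 : Matrix (Fin 2 × Fin 2) (Fin 2 × Fin 2) ℂ)
        - ((1 - pd) ^ 2 / 2 : ℝ) • Nbot - ((1 - pd) / 2 : ℝ) • (Nzero - None')
    Nbar0.PosSemidef ∧ Nbar1.PosSemidef ∧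
      Nbar0 + Nbar1 + ((1 - pd) ^ 2 : ℝ) • Nbot = 1 := by
  intro Nbar0 Nbar1
  have hq : |1 - pd| ≤ 1 := abs_le.mpr ⟨by linarith [hpd.2], by linarith [hpd.1]⟩
  have hNbar0 : Nbar0 = squashedEffect (1 - pd) := rfl
  have hNbar1 : Nbar1 = squashedEffect (-(1 - pd)) := by
    simp only [Nbar1, squashedEffect, neg_sq]
    module
  rw [hNbar0, hNbar1]
  exact ⟨posSemidef_squashedEffect hq, posSemidef_squashedEffect (by rwa [abs_neg]),
    squashedEffect_add_squashedEffect_neg _⟩
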